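/- arXiv:2601.15517 — 3 statements merged into one kernel-verified Lean document; each statement's English description precedes it below -/
import Mathlib

section
/- Let f12, f3, f4 be real numbers with 0 ≤ f4 ≤ f12 ≤ f3, f3 ≥ f12 + (2/3)*f4, and 3*f3 + 6*f12 + 6*f4 ≤ 1. Define P(x3) = 60*f12*x3^5 + 24*f3*x3^5 + 60*f4*x3^5 + 36*f12*x3^4 + 48*f3*x3^4 + 48*f4*x3^4 - 12*x3^5 - 51*f12*x3^3 + 54*f3*x3^3 - 33*f4*x3^3 - 12*x3^4 - 65*f12*x3^2 - 2*f3*x3^2 - 65*f4*x3^2 + 3*x3^3 - 57*f12*x3 - 22*f3*x3 - 55*f4*x3 + 9*x3^2 - 19*f12 - 6*f3 - 19*f4 + 9*x3 + 3. Then P(x3) ≥ 0 for all x3 ∈ [0,1]. -/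
theorem stmt14 (f12 f3 f4 : ℝ) (hf4 : 0 ≤ f4) (h43 : f4 ≤ f12) (h12 : f12 ≤ f3)
    (hres : f3 ≥ f12 + (2/3)*f4) (hsum : 3*f3 + 6*f12 + 6*f4 ≤ 1)
    (x3 : ℝ) (hx0 : 0 ≤ x3) (hx1 : x3 ≤ 1) :
    0 ≤ 60*f12*x3^5 + 24*f3*x3^5 + 60*f4*x3^5 + 36*f12*x3^4 + 48*f3*x3^4 + 48*f4*x3^4
      - 12*x3^5 - 51*f12*x3^3 + 54*f3*x3^3 - 33*f4*x3^3 - 12*x3^4 - 65*f12*x3^2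
      - 2*f3*x3^2 - 65*f4*x3^2 + 3*x3^3 - 57*f12*x3 - 22*f3*x3 - 55*f4*x3 + 9*x3^2
      - 19*f12 - 6*f3 - 19*f4 + 9*x3 + 3 := by
    have hy : 0 ≤ 1 - x3 := by linarith
    have hg4 : 0 ≤ (1 - 3*f3 - 6*f12 - 6*f4) := by linarith
    have hg3 : 0 ≤ (f3 - f12 - (2/3)*f4) := by linarith
    have hg2 : 0 ≤ (f12 - f4) := by linarith
    have hg1 : 0 ≤ f4 := hf4
    have hg40 : 0 ≤ (1 - 3*f3 - 6*f12 - 6*f4) * (x3^0 * (1-x3)^5) := mul_nonneg hg4 (mul_nonneg (pow_nonneg hx0 0) (pow_nonneg hy 5))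
    have hg41 : 0 ≤ (1 - 3*f3 - 6*f12 - 6*f4) * (x3^1 * (1-x3)^4) := mul_nonneg hg4 (mul_nonneg (pow_nonneg hx0 1) (pow_nonneg hy 4))
    have hg42 : 0 ≤ (1 - 3*f3 - 6*f12 - 6*f4) * (x3^2 * (1-x3)^3) := mul_nonneg hg4 (mul_nonneg (pow_nonneg hx0 2) (pow_nonneg hy 3))
    have hg43 : 0 ≤ (1 - 3*f3 - 6*f12 - 6*f4) * (x3^3 * (1-x3)^2) := mul_nonneg hg4 (mul_nonneg (pow_nonneg hx0 3) (pow_nonneg hy 2))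
    have hg44 : 0 ≤ (1 - 3*f3 - 6*f12 - 6*f4) * (x3^4 * (1-x3)^1) := mul_nonneg hg4 (mul_nonneg (pow_nonneg hx0 4) (pow_nonneg hy 1))
    have hg45 : 0 ≤ (1 - 3*f3 - 6*f12 - 6*f4) * (x3^5 * (1-x3)^0) := mul_nonneg hg4 (mul_nonneg (pow_nonneg hx0 5) (pow_nonneg hy 0))
    have hg30 : 0 ≤ (f3 - f12 - (2/3)*f4) * (x3^0 * (1-x3)^5) := mul_nonneg hg3 (mul_nonneg (pow_nonneg hx0 0) (pow_nonneg hy 5))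
    have hg31 : 0 ≤ (f3 - f12 - (2/3)*f4) * (x3^1 * (1-x3)^4) := mul_nonneg hg3 (mul_nonneg (pow_nonneg hx0 1) (pow_nonneg hy 4))
    have hg32 : 0 ≤ (f3 - f12 - (2/3)*f4) * (x3^2 * (1-x3)^3) := mul_nonneg hg3 (mul_nonneg (pow_nonneg hx0 2) (pow_nonneg hy 3))
    have hg33 : 0 ≤ (f3 - f12 - (2/3)*f4) * (x3^3 * (1-x3)^2) := mul_nonneg hg3 (mul_nonneg (pow_nonneg hx0 3) (pow_nonneg hy 2))
    have hg34 : 0 ≤ (f3 - f12 - (2/3)*f4) * (x3^4 * (1-x3)^1) := mul_nonneg hg3 (mul_nonneg (pow_nonneg hx0 4) (pow_nonneg hy 1))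
    have hg35 : 0 ≤ (f3 - f12 - (2/3)*f4) * (x3^5 * (1-x3)^0) := mul_nonneg hg3 (mul_nonneg (pow_nonneg hx0 5) (pow_nonneg hy 0))
    have hg20 : 0 ≤ (f12 - f4) * (x3^0 * (1-x3)^5) := mul_nonneg hg2 (mul_nonneg (pow_nonneg hx0 0) (pow_nonneg hy 5))
    have hg21 : 0 ≤ (f12 - f4) * (x3^1 * (1-x3)^4) := mul_nonneg hg2 (mul_nonneg (pow_nonneg hx0 1) (pow_nonneg hy 4))
    have hg22 : 0 ≤ (f12 - f4) * (x3^2 * (1-x3)^3) := mul_nonneg hg2 (mul_nonneg (pow_nonneg hx0 2) (pow_nonneg hy 3))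
    have hg23 : 0 ≤ (f12 - f4) * (x3^3 * (1-x3)^2) := mul_nonneg hg2 (mul_nonneg (pow_nonneg hx0 3) (pow_nonneg hy 2))
    have hg24 : 0 ≤ (f12 - f4) * (x3^4 * (1-x3)^1) := mul_nonneg hg2 (mul_nonneg (pow_nonneg hx0 4) (pow_nonneg hy 1))
    have hg25 : 0 ≤ (f12 - f4) * (x3^5 * (1-x3)^0) := mul_nonneg hg2 (mul_nonneg (pow_nonneg hx0 5) (pow_nonneg hy 0))
    have hg10 : 0 ≤ f4 * (x3^0 * (1-x3)^5) := mul_nonneg hg1 (mul_nonneg (pow_nonneg hx0 0) (pow_nonneg hy 5))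
    have hg11 : 0 ≤ f4 * (x3^1 * (1-x3)^4) := mul_nonneg hg1 (mul_nonneg (pow_nonneg hx0 1) (pow_nonneg hy 4))
    have hg12 : 0 ≤ f4 * (x3^2 * (1-x3)^3) := mul_nonneg hg1 (mul_nonneg (pow_nonneg hx0 2) (pow_nonneg hy 3))
    have hg13 : 0 ≤ f4 * (x3^3 * (1-x3)^2) := mul_nonneg hg1 (mul_nonneg (pow_nonneg hx0 3) (pow_nonneg hy 2))
    have hg14 : 0 ≤ f4 * (x3^4 * (1-x3)^1) := mul_nonneg hg1 (mul_nonneg (pow_nonneg hx0 4) (pow_nonneg hy 1))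
    have hg15 : 0 ≤ f4 * (x3^5 * (1-x3)^0) := mul_nonneg hg1 (mul_nonneg (pow_nonneg hx0 5) (pow_nonneg hy 0))

    linarith [hg40,hg41,hg42,hg43,hg44,hg45,hg30,hg31,hg32,hg33,hg34,hg35,hg20,hg21,hg22,hg23,hg24,hg25,hg10,hg11,hg12,hg13,hg14,hg15]
end

section
/- Define c1(x2,x3) = 216*x2^4*x3^2 + 48*x2^3*x3^3 + 24*x2^4*x3 - 120*x2^3*x3^2 + 48*x2^2*x3^3 - 42*x2^4 - 72*x2^3*x3 - 216*x2^2*x3^2 - 84*x2^3 - 24*x2^2*x3 - 40*x2*x3^2 + 40*x2^2 - 24*x2*x3 + 164*x2 + 82. Then for all real x2, x3 with 0 ≤ x3 ≤ x2 ≤ 1, one has c1(x2,x3) ≥ 0, and c1(x2,x3) = 0 only when x2 = 1 and x3 = 1. -/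
theorem stmt17 (x2 x3 : ℝ) (h0 : 0 ≤ x3) (h1 : x3 ≤ x2) (h2 : x2 ≤ 1) :
    0 ≤ 216*x2^4*x3^2 + 48*x2^3*x3^3 + 24*x2^4*x3 - 120*x2^3*x3^2 + 48*x2^2*x3^3
      - 42*x2^4 - 72*x2^3*x3 - 216*x2^2*x3^2 - 84*x2^3 - 24*x2^2*x3 - 40*x2*x3^2
      + 40*x2^2 - 24*x2*x3 + 164*x2 + 82 ∧
    (216*x2^4*x3^2 + 48*x2^3*x3^3 + 24*x2^4*x3 - 120*x2^3*x3^2 + 48*x2^2*x3^3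
      - 42*x2^4 - 72*x2^3*x3 - 216*x2^2*x3^2 - 84*x2^3 - 24*x2^2*x3 - 40*x2*x3^2
      + 40*x2^2 - 24*x2*x3 + 164*x2 + 82 = 0 → x2 = 1 ∧ x3 = 1) := by
  have key : 82*(1-x3) ≤ 216*x2^4*x3^2 + 48*x2^3*x3^3 + 24*x2^4*x3 - 120*x2^3*x3^2 + 48*x2^2*x3^3
      - 42*x2^4 - 72*x2^3*x3 - 216*x2^2*x3^2 - 84*x2^3 - 24*x2^2*x3 - 40*x2*x3^2
      + 40*x2^2 - 24*x2*x3 + 164*x2 + 82 := by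
    nlinarith [mul_nonneg h0 (sub_nonneg.2 h1), mul_nonneg (sub_nonneg.2 h1) (sub_nonneg.2 h2),
      mul_nonneg h0 (sub_nonneg.2 h2), sq_nonneg (x2-x3), sq_nonneg (1-x2), sq_nonneg (x2*x3-1),
      mul_nonneg (mul_nonneg h0 h0) (sub_nonneg.2 h2), sq_nonneg (x2*x3-x3), sq_nonneg (x2*x3 - x2),
      mul_nonneg (mul_nonneg (sub_nonneg.2 h2) (sub_nonneg.2 h2)) h0]
  constructor
  · nlinarith [key]
  · intro hz
    have hx3 : x3 = 1 := by nlinarith [key]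
    have hx2 : x2 = 1 := le_antisymm h2 (hx3 ▸ h1)
    exact ⟨hx2, hx3⟩
end

section
/- For all real x2, x3 with 0 ≤ x3 ≤ x2 ≤ 1: (i) 2*x2*x3 - x2 - 1 ≤ 0; (ii) 8*x2^3*x3 + 2*x2^2*x3^2 + 4*x2^3 - x2^2*x3 + 2*x2*x3^2 + x2^2 - 6*x2*x3 - 4*x2 - x3 - 5 ≤ 0. Consequently b0(x2,x3) := 9*(2*x2*x3 - x2 - 1)*(8*x2^3*x3 + 2*x2^2*x3^2 + 4*x2^3 - x2^2*x3 + 2*x2*x3^2 + x2^2 - 6*x2*x3 - 4*x2 - x3 - 5) ≥ 0, and similarly b1(x2,x3) := -2*(2*x2*x3 - x2 - 1)*(30*x2^3*x3 + 6*x2^2*x3^2 + 15*x2^3 - 9*x2^2*x3 + 6*x2*x3^2 + 6*x2^2 - 24*x2*x3 - 19*x2 - 5*x3 - 22) ≤ 0, using that 30*x2^3*x3 + 6*x2^2*x3^2 + 15*x2^3 - 9*x2^2*x3 + 6*x2*x3^2 + 6*x2^2 - 24*x2*x3 - 19*x2 - 5*x3 - 22 ≤ 0 on the same region. -/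
theorem stmt19 (x2 x3 : ℝ) (h0 : 0 ≤ x3) (h1 : x3 ≤ x2) (h2 : x2 ≤ 1) :
    2*x2*x3 - x2 - 1 ≤ 0 ∧
    8*x2^3*x3 + 2*x2^2*x3^2 + 4*x2^3 - x2^2*x3 + 2*x2*x3^2 + x2^2 - 6*x2*x3
      - 4*x2 - x3 - 5 ≤ 0 ∧
    0 ≤ 9*(2*x2*x3 - x2 - 1)*(8*x2^3*x3 + 2*x2^2*x3^2 + 4*x2^3 - x2^2*x3 + 2*x2*x3^2
      + x2^2 - 6*x2*x3 - 4*x2 - x3 - 5) ∧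
    30*x2^3*x3 + 6*x2^2*x3^2 + 15*x2^3 - 9*x2^2*x3 + 6*x2*x3^2 + 6*x2^2 - 24*x2*x3
      - 19*x2 - 5*x3 - 22 ≤ 0 ∧
    -2*(2*x2*x3 - x2 - 1)*(30*x2^3*x3 + 6*x2^2*x3^2 + 15*x2^3 - 9*x2^2*x3 + 6*x2*x3^2
      + 6*x2^2 - 24*x2*x3 - 19*x2 - 5*x3 - 22) ≤ 0 := by
  have h3 : 0 ≤ x2 := le_trans h0 h1
  have hA : 2*x2*x3 - x2 - 1 ≤ 0 := by nlinarith [mul_nonneg h3 h0, mul_le_one₀ h2 h0 (h1.trans h2)]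
  have hB : 8*x2^3*x3 + 2*x2^2*x3^2 + 4*x2^3 - x2^2*x3 + 2*x2*x3^2 + x2^2 - 6*x2*x3
      - 4*x2 - x3 - 5 ≤ 0 := by
    nlinarith [mul_nonneg h3 h0, mul_nonneg (mul_nonneg h3 h3) h0, sq_nonneg x2, sq_nonneg x3,
      mul_nonneg (sub_nonneg.2 h2) (sub_nonneg.2 (h1.trans h2)),
      mul_nonneg (mul_nonneg h3 h0) (sub_nonneg.2 h2),
      mul_nonneg (mul_nonneg h3 h0) (sub_nonneg.2 (h1.trans h2)),
      mul_nonneg (mul_nonneg (mul_nonneg h3 h3) h0) (sub_nonneg.2 h2),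
      mul_nonneg (mul_nonneg (mul_nonneg h3 h0) h0) (sub_nonneg.2 h2)]
  have hC : 30*x2^3*x3 + 6*x2^2*x3^2 + 15*x2^3 - 9*x2^2*x3 + 6*x2*x3^2 + 6*x2^2 - 24*x2*x3
      - 19*x2 - 5*x3 - 22 ≤ 0 := by
    nlinarith [mul_nonneg h3 h0, mul_nonneg (mul_nonneg h3 h3) h0, sq_nonneg x2, sq_nonneg x3,
      mul_nonneg (sub_nonneg.2 h2) (sub_nonneg.2 (h1.trans h2)),
      mul_nonneg (mul_nonneg h3 h0) (sub_nonneg.2 h2),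
      mul_nonneg (mul_nonneg h3 h0) (sub_nonneg.2 (h1.trans h2)),
      mul_nonneg (mul_nonneg (mul_nonneg h3 h3) h0) (sub_nonneg.2 h2),
      mul_nonneg (mul_nonneg (mul_nonneg h3 h0) h0) (sub_nonneg.2 h2)]
  refine ⟨hA, hB, ?_, hC, ?_⟩
  · nlinarith [mul_nonneg (neg_nonneg.2 hA) (neg_nonneg.2 hB)]
  · nlinarith [mul_nonneg (neg_nonneg.2 hA) (neg_nonneg.2 hC)]
end
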